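/- For every F ∈ dom S, the functions ΓF and Γ'F belong to ℓ²(X⁰,m⁰); more precisely, if a,b>0 are constants such that ‖f‖²_{L^∞(0,1)}+‖f'‖²_{L^∞(0,1)} ≤ a‖f''‖²_{L²(0,1)}+b‖f‖²_{L²(0,1)} for all f∈H²(0,1), then both ‖ΓF‖²_{ℓ²(X⁰,m⁰)} and ‖Γ'F‖²_{ℓ²(X⁰,m⁰)} are bounded by 2a‖F''‖²_{L²(X¹,m¹)}+2b‖F‖²_{L²(X¹,m¹)}. -/

import Mathlib

open MeasureTheory Set ENNReal

set_option linter.unusedSectionVars false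

noncomputable section

/-- A weighted network: countable connected graph without loops or multiple edges,
equipped with positive conductances `c` satisfying `m⁰(x) = ∑_{y∼x} c(xy) < ∞`. -/
structure Network (V : Type) : Type where
  adj : V → V → Prop
  adj_symm : ∀ x y, adj x y → adj y x
  adj_irrefl : ∀ x, ¬ adj x x
  adj_connected : ∀ x y, Relation.ReflTransGen adj x y
  c : V → V → ℝ
  c_symm : ∀ x y, c x y = c y x
  c_pos : ∀ x y, adj x y → 0 < c x y
  c_eq_zero : ∀ x y, ¬ adj x y → c x y = 0
  c_summable : ∀ x, Summable fun y => c x y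

namespace Network

variable {V : Type} [Countable V] [MeasurableSpace V] [DiscreteMeasurableSpace V]

/-- The vertex weight `m⁰(x) = ∑_{y : y ∼ x} c(xy)`. -/
def m0 (N : Network V) (x : V) : ℝ := ∑' y, N.c x y

/-- The measure `m¹` on the metric graph `X¹`.  A point `((x,y),t)` represents the point
at distance `t ∈ (0,1)` from `x` on the edge `[x,y]`; each edge appears with both
orientations, whence the factor `1/2`. -/
def edgeMeasure (N : Network V) : Measure ((V × V) × ℝ) :=
  Measure.sum fun e : V × V =>
    Measure.map (fun t => (e, t))
      ((ENNReal.ofReal (N.c e.1 e.2 / 2)) • (volume.restrict (Set.Ioo (0:ℝ) 1)))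

/-- The identification `(xy,t) ≡ (yx,1-t)` of the two orientations of an edge. -/
def eFlip : (V × V) × ℝ → (V × V) × ℝ := fun p => ((p.1.2, p.1.1), 1 - p.2)

theorem measurable_eFlip : Measurable (eFlip (V := V)) := by
  apply Measurable.prod
  · exact ((measurable_snd.comp measurable_fst).prodMk (measurable_fst.comp measurable_fst))
  · exact measurable_const.sub measurable_snd

theorem measurePreserving_eFlip (N : Network V) :
    MeasurePreserving (eFlip (V := V)) N.edgeMeasure N.edgeMeasure := by
  refine ⟨measurable_eFlip, ?_⟩
  ext s hs
  rw [Measure.map_apply measurable_eFlip hs, edgeMeasure,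
    Measure.sum_apply _ (measurable_eFlip hs), Measure.sum_apply _ hs]
  have key : ∀ e : V × V,
      (Measure.map (fun t => (e, t))
        ((ENNReal.ofReal (N.c e.1 e.2 / 2)) • (volume.restrict (Set.Ioo (0:ℝ) 1))))
          (eFlip ⁻¹' s)
      = (Measure.map (fun t => ((e.2, e.1), t))
        ((ENNReal.ofReal (N.c e.2 e.1 / 2)) • (volume.restrict (Set.Ioo (0:ℝ) 1)))) s := by
    intro e
    have hme : Measurable fun t : ℝ => (e, t) := measurable_prodMk_left
    have hme' : Measurable fun t : ℝ => ((e.2, e.1), t) := measurable_prodMk_left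
    rw [Measure.map_apply hme (measurable_eFlip hs), Measure.map_apply hme' hs,
      Measure.smul_apply, Measure.smul_apply, N.c_symm e.1 e.2]
    congr 1
    have hpre : ((fun t : ℝ => (e, t)) ⁻¹' (eFlip ⁻¹' s))
        = (fun t : ℝ => 1 - t) ⁻¹' ((fun t : ℝ => ((e.2, e.1), t)) ⁻¹' s) := by
      ext t; simp [eFlip]
    rw [hpre]
    have hmp : MeasurePreserving (fun t : ℝ => 1 - t)
        (volume.restrict (Set.Ioo (0:ℝ) 1)) (volume.restrict (Set.Ioo (0:ℝ) 1)) := by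
      have h0 : MeasurePreserving (fun t : ℝ => 1 - t) volume volume :=
        Measure.measurePreserving_sub_left volume 1
      have h1 := h0.restrict_preimage (s := Set.Ioo (0:ℝ) 1) measurableSet_Ioo
      have h2 : (fun t : ℝ => 1 - t) ⁻¹' (Set.Ioo (0:ℝ) 1) = Set.Ioo (0:ℝ) 1 := by
        ext t; constructor <;> (intro ht; simp only [Set.mem_preimage, Set.mem_Ioo] at *; constructor <;> linarith [ht.1, ht.2])
      rwa [h2] at h1
    exact (hmp.measure_preimage ((hme' hs).nullMeasurableSet)).symm ▸ rfl
  calc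
    (∑' e : V × V,
        (Measure.map (fun t => (e, t))
          ((ENNReal.ofReal (N.c e.1 e.2 / 2)) • (volume.restrict (Set.Ioo (0:ℝ) 1))))
            (eFlip ⁻¹' s))
        = ∑' e : V × V,
          (Measure.map (fun t => ((e.2, e.1), t))
            ((ENNReal.ofReal (N.c e.2 e.1 / 2)) • (volume.restrict (Set.Ioo (0:ℝ) 1)))) s :=
      tsum_congr key
    _ = ∑' e : V × V,
          (Measure.map (fun t => (e, t))
            ((ENNReal.ofReal (N.c e.1 e.2 / 2)) • (volume.restrict (Set.Ioo (0:ℝ) 1)))) s :=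
      (Equiv.prodComm V V).tsum_eq fun e =>
        (Measure.map (fun t => (e, t))
          ((ENNReal.ofReal (N.c e.1 e.2 / 2)) • (volume.restrict (Set.Ioo (0:ℝ) 1)))) s

/-- The continuous linear map `F ↦ F ∘ σ` induced by the edge-orientation flip. -/
def flipOp (N : Network V) : Lp ℂ 2 N.edgeMeasure →L[ℂ] Lp ℂ 2 N.edgeMeasure :=
  (Lp.compMeasurePreservingₗᵢ (E := ℂ) (p := 2) ℂ (eFlip (V := V))
    N.measurePreserving_eFlip).toContinuousLinearMap

/-- The Hilbert space `L²(X¹, m¹)` of square-integrable functions on the metric graph,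
realized as the subspace of `L²` functions on oriented edges which are compatible with
the identification `(xy,t) ≡ (yx, 1-t)`. -/
def L2X (N : Network V) : Submodule ℂ (Lp ℂ 2 N.edgeMeasure) :=
  LinearMap.ker ((N.flipOp - ContinuousLinearMap.id ℂ (Lp ℂ 2 N.edgeMeasure) :
    Lp ℂ 2 N.edgeMeasure →L[ℂ] Lp ℂ 2 N.edgeMeasure) : Lp ℂ 2 N.edgeMeasure →ₗ[ℂ] Lp ℂ 2 N.edgeMeasure)

theorem isClosed_L2X (N : Network V) : IsClosed (N.L2X : Set (Lp ℂ 2 N.edgeMeasure)) :=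
  ContinuousLinearMap.isClosed_ker (N.flipOp - ContinuousLinearMap.id ℂ (Lp ℂ 2 N.edgeMeasure))

instance (N : Network V) : CompleteSpace N.L2X :=
  (isClosed_L2X N).completeSpace_coe

end Network

namespace Network

variable {V : Type} [Countable V] [MeasurableSpace V] [DiscreteMeasurableSpace V]

/-- The value of (a representative of) `F ∈ L²(X¹,m¹)` at the point of the edge `[x,y]`
at distance `t` from `x`. -/
def edgeFun (N : Network V) (F : Lp ℂ 2 N.edgeMeasure) (x y : V) (t : ℝ) : ℂ :=
  F ((x, y), t)

/-- The counting measure on vertices weighted by `m⁰`; `ℓ²(X⁰,m⁰) = Lp ℂ 2 N.vertexMeasure`. -/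
def vertexMeasure (N : Network V) : Measure V :=
  Measure.sum fun x => (ENNReal.ofReal (N.m0 x)) • Measure.dirac x

/-- The averaging operator, at the level of functions. -/
def avgFun (N : Network V) (f : V → V → ℝ → ℂ) (x y : V) (t : ℝ) : ℂ :=
  (N.m0 x : ℂ)⁻¹ * (∑' u, (N.c x u : ℂ) * (∫ s in (0:ℝ)..(1 - t), f x u s))
    + (N.m0 y : ℂ)⁻¹ * (∑' v, (N.c y v : ℂ) * (∫ s in (0:ℝ)..t, f y v s))

/-- `f, g, h` are (continuous versions of) an element of `Ĥ²(X¹,m¹)` together with its first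
and second edgewise derivatives: on each edge, `g` is the derivative of `f` and `h` the
derivative of `g` (in the sense of absolutely continuous functions, via the fundamental
theorem of calculus), and `f`, `g`, `h` are square-integrable on the metric graph. -/
structure IsH2Rep (N : Network V) (f g h : V → V → ℝ → ℂ) : Prop where
  ftc₁ : ∀ x y, N.adj x y → ∀ t ∈ Set.Icc (0:ℝ) 1,
    f x y t = f x y 0 + ∫ s in (0:ℝ)..t, g x y s
  ftc₂ : ∀ x y, N.adj x y → ∀ t ∈ Set.Icc (0:ℝ) 1,
    g x y t = g x y 0 + ∫ s in (0:ℝ)..t, h x y s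
  intervalIntegrable_g : ∀ x y, N.adj x y → IntervalIntegrable (g x y) volume 0 1
  intervalIntegrable_h : ∀ x y, N.adj x y → IntervalIntegrable (h x y) volume 0 1
  memL2_f : MemLp (fun p : (V × V) × ℝ => f p.1.1 p.1.2 p.2) 2 N.edgeMeasure
  memL2_g : MemLp (fun p : (V × V) × ℝ => g p.1.1 p.1.2 p.2) 2 N.edgeMeasure
  memL2_h : MemLp (fun p : (V × V) × ℝ => h p.1.1 p.1.2 p.2) 2 N.edgeMeasure

/-- The graph of the operator `S = -d²/dt²` with domain the functions in `Ĥ²(X¹,m¹)` which are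
continuous at the vertices: `(F, G) ∈ graph S` iff `F` has an edgewise `H²` representative
`f` (with derivatives `g`, `h`), `f` is continuous at each vertex, and `G = -f''`. -/
def SGraph (N : Network V) (F G : N.L2X) : Prop :=
  ∃ f g h : V → V → ℝ → ℂ, N.IsH2Rep f g h ∧
    (⇑(F : Lp ℂ 2 N.edgeMeasure) =ᵐ[N.edgeMeasure] fun p => f p.1.1 p.1.2 p.2) ∧
    (∀ x u v, N.adj x u → N.adj x v → f x u 0 = f x v 0) ∧
    (⇑(G : Lp ℂ 2 N.edgeMeasure) =ᵐ[N.edgeMeasure] fun p => -(h p.1.1 p.1.2 p.2))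

/-- The graph of the (Kirchhoff) Laplacian `L`: the restriction of `S` to the functions
satisfying moreover `F'(x) = ∑_{y∼x} c(xy) F'(xy,0+) = 0` at every vertex `x`. -/
def LGraph (N : Network V) (F G : N.L2X) : Prop :=
  ∃ f g h : V → V → ℝ → ℂ, N.IsH2Rep f g h ∧
    (⇑(F : Lp ℂ 2 N.edgeMeasure) =ᵐ[N.edgeMeasure] fun p => f p.1.1 p.1.2 p.2) ∧
    (∀ x u v, N.adj x u → N.adj x v → f x u 0 = f x v 0) ∧
    (∀ x, Summable fun y => (N.c x y : ℂ) * g x y 0) ∧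
    (∀ x, ∑' y, (N.c x y : ℂ) * g x y 0 = 0) ∧
    (⇑(G : Lp ℂ 2 N.edgeMeasure) =ᵐ[N.edgeMeasure] fun p => -(h p.1.1 p.1.2 p.2))

end Network

/-- The graph of the adjoint of a densely defined operator, described by its graph `T`:
`(G,K) ∈ graph T*` iff `⟪G, SF⟫ = ⟪K, F⟫` for all `(F, SF) ∈ T`. -/
def adjointGraph {H : Type*} [NormedAddCommGroup H] [InnerProductSpace ℂ H]
    (T : Set (H × H)) : Set (H × H) :=
  {q | ∀ p ∈ T, (inner ℂ q.1 p.2 : ℂ) = inner ℂ q.2 p.1}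

/-- A densely defined operator given by its graph `T` is self-adjoint if `T* = T`. -/
def IsSelfAdjointGraph {H : Type*} [NormedAddCommGroup H] [InnerProductSpace ℂ H]
    (T : Set (H × H)) : Prop :=
  Dense (Prod.fst '' T) ∧ adjointGraph T = T

/-- The entire function `Φ(z,t) = t` for `z = 0` and `sin(zt)/z` otherwise. -/
def Phi (z : ℂ) (t : ℝ) : ℂ := if z = 0 then (t : ℂ) else Complex.sin (z * t) / z

namespace Network

variable {V : Type} [Countable V] [MeasurableSpace V] [DiscreteMeasurableSpace V]

/-- Iterated forward extension step for the d'Alembert extension: `fwdExt f n x y s`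
represents `F̃(xy, s + n)` for `s ∈ (0,1]`. -/
def fwdExt (N : Network V) (f : V → V → ℝ → ℂ) : ℕ → V → V → ℝ → ℂ
  | 0 => f
  | (n+1) => fun x y s =>
      (2 / (N.m0 y) : ℂ) * ∑' v, (N.c y v : ℂ) * N.fwdExt f n y v s - N.fwdExt f n y x s

/-- Iterated backward extension step for the d'Alembert extension: `bwdExt f n x y s`
represents `F̃(xy, s - n)` for `s ∈ [0,1)`. -/
def bwdExt (N : Network V) (f : V → V → ℝ → ℂ) : ℕ → V → V → ℝ → ℂ
  | 0 => f
  | (n+1) => fun x y s =>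
      (2 / (N.m0 x) : ℂ) * ∑' u, (N.c x u : ℂ) * N.bwdExt f n u x s - N.bwdExt f n y x s

/-- The d'Alembert extension `F̃` of a function `F` on the metric graph: each edge component
`t ↦ F(xy,t)`, `t ∈ [0,1]`, is extended to the whole real line by the recursion
`F̃(xy,t) = (2/m⁰(y)) ∑_{v∼y} c(yv) F̃(yv,t-1) - F̃(yx,t-1)` for `t > 1` and
`F̃(xy,t) = (2/m⁰(x)) ∑_{u∼x} c(ux) F̃(ux,t+1) - F̃(yx,t+1)` for `t < 0`. -/
def tilde (N : Network V) (f : V → V → ℝ → ℂ) (x y : V) (t : ℝ) : ℂ :=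
  if 0 ≤ t ∧ t ≤ 1 then f x y t
  else if 1 < t then N.fwdExt f (⌈t⌉ - 1).toNat x y (t - ((⌈t⌉ - 1 : ℤ) : ℝ))
  else N.bwdExt f (-⌊t⌋).toNat x y (t + ((-⌊t⌋ : ℤ) : ℝ))

/-- The d'Alembert operator `C(τ)` at the level of functions. -/
def dAlembertFun (N : Network V) (f : V → V → ℝ → ℂ) (τ : ℝ) (x y : V) (t : ℝ) : ℂ :=
  (N.tilde f x y (t + τ) + N.tilde f x y (t - τ)) / 2

/-- The squared norm `‖g‖²_{L²(X¹,m¹)} = (1/2) ∑_x ∑_{y} c(xy) ∫₀¹ |g(xy,t)|² dt`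
(with values in `ℝ≥0∞`). -/
def normSq (N : Network V) (g : V → V → ℝ → ℂ) : ℝ≥0∞ :=
  (1/2 : ℝ≥0∞) * ∑' x, ∑' y, ENNReal.ofReal (N.c x y) *
    ∫⁻ t in Set.Ioo (0:ℝ) 1, ((‖g x y t‖₊ : ℝ≥0∞) ^ 2)

end Network

namespace Network

/-- The squared `L²(X¹,m¹)`-norm, `‖g‖² = (1/2) ∑_x ∑_y c(xy) ∫₀¹ ‖g(xy,t)‖² dt`. -/
def normSqR {V : Type} (N : Network V) (g : V → V → ℝ → ℂ) : ℝ :=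
  (1/2 : ℝ) * ∑' x, ∑' y, N.c x y * ∫ t in (0:ℝ)..1, ‖g x y t‖^2

/-- The squared `ℓ²(X⁰,m⁰)`-norm, `‖φ‖² = ∑_x m⁰(x) ‖φ(x)‖²`. -/
def vertexNormSqR {V : Type} (N : Network V) (φ : V → ℂ) : ℝ :=
  ∑' x, N.m0 x * ‖φ x‖^2

end Network

/-! Apply the trace inequality on every edge at its endpoint `t = 0` and weight it by `c(xy)`.
Summing over the edges at `x` bounds `m⁰(x) |F(x)|²` by the local energy
`∑_y c(xy) (a ‖F''‖² + b ‖F‖²)` on those edges, and the weighted Cauchy–Schwarz inequality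
(the weights `c(xy)` sum to `m⁰(x)`) gives the same bound for `m⁰(x) |Γ'F(x)|²`. Summing over
`x` counts every edge twice, which is the factor `2`. -/

theorem sq_tsum_mul_le_tsum_mul_tsum {ι : Type*} {c w : ι → ℝ} (hc : ∀ i, 0 ≤ c i)
    (hc_sum : Summable c) (hcw : Summable fun i => c i * w i ^ 2) :
    Summable (fun i => c i * w i) ∧ (∑' i, c i * w i) ^ 2 ≤ (∑' i, c i) * ∑' i, c i * w i ^ 2 := by
  have hsum : Summable fun i => c i * w i := by
    refine Summable.of_norm_bounded ((hc_sum.add hcw).div_const 2) fun i => ?_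
    rw [norm_mul, Real.norm_of_nonneg (hc i), Real.norm_eq_abs]
    nlinarith [hc i, mul_nonneg (hc i) (sq_nonneg (|w i| - 1)), sq_abs (w i)]
  refine ⟨hsum, le_of_tendsto_of_tendsto' (hsum.hasSum.pow 2)
    (Filter.Tendsto.mul hc_sum.hasSum hcw.hasSum) fun s =>
      Finset.sum_sq_le_sum_mul_sum_of_sq_le_mul s (r := fun i => c i * w i) (fun i _ => hc i)
        (fun i _ => mul_nonneg (hc i) (sq_nonneg _)) fun i _ => le_of_eq ?_⟩
  ring

theorem summable_and_tsum_le_of_le_tsum_fiber {α β : Type*} {E : α × β → ℝ} (hE : Summable E)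
    {u : α → ℝ} (hu0 : ∀ x, 0 ≤ u x) (hu : ∀ x, u x ≤ ∑' y, E (x, y)) :
    Summable u ∧ ∑' x, u x ≤ ∑' e, E e := by
  have hu_sum : Summable u := .of_nonneg_of_le hu0 hu hE.prod
  exact ⟨hu_sum, (hu_sum.tsum_le_tsum hu hE.prod).trans_eq hE.tsum_prod.symm⟩

theorem summable_and_tsum_fiber_le {α β : Type*} {E : α × β → ℝ} (hE : Summable E)
    {w : α → β → ℝ} (hw0 : ∀ x y, 0 ≤ w x y) (hwE : ∀ x y, w x y ≤ E (x, y)) (x : α) :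
    Summable (w x) ∧ ∑' y, w x y ≤ ∑' y, E (x, y) := by
  have hw_sum : Summable (w x) := .of_nonneg_of_le (hw0 x) (hwE x) (hE.prod_factor x)
  exact ⟨hw_sum, hw_sum.tsum_le_tsum (hwE x) (hE.prod_factor x)⟩

def IsSobolevTraceBound (a b : ℝ) : Prop :=
  ∀ f g h : ℝ → ℂ,
    (∀ t ∈ Set.Icc (0:ℝ) 1, f t = f 0 + ∫ s in (0:ℝ)..t, g s) →
    (∀ t ∈ Set.Icc (0:ℝ) 1, g t = g 0 + ∫ s in (0:ℝ)..t, h s) →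
    IntervalIntegrable g volume 0 1 → IntervalIntegrable h volume 0 1 →
    ∀ t ∈ Set.Icc (0:ℝ) 1,
      ‖f t‖^2 + ‖g t‖^2 ≤ a * (∫ s in (0:ℝ)..1, ‖h s‖^2) + b * ∫ s in (0:ℝ)..1, ‖f s‖^2

namespace Network

variable {V : Type} [Countable V] [MeasurableSpace V] [DiscreteMeasurableSpace V]

theorem c_nonneg (N : Network V) (x y : V) : 0 ≤ N.c x y := by
  by_cases hxy : N.adj x y
  · exact (N.c_pos x y hxy).le
  · exact (N.c_eq_zero x y hxy).ge

theorem m0_nonneg (N : Network V) (x : V) : 0 ≤ N.m0 x :=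
  tsum_nonneg (N.c_nonneg x)

theorem m0_mul_norm_sq_eq_tsum (N : Network V) {x : V} {z : ℂ} {v : V → ℂ}
    (hv : ∀ y, N.adj x y → z = v y) :
    N.m0 x * ‖z‖ ^ 2 = ∑' y, N.c x y * ‖v y‖ ^ 2 := by
  rw [m0, ← tsum_mul_right]
  refine tsum_congr fun y => ?_
  by_cases hxy : N.adj x y
  · rw [hv y hxy]
  · simp [N.c_eq_zero x y hxy]

theorem summable_and_m0_mul_norm_average_sq_le (N : Network V) (x : V) {v : V → ℂ}
    (hv : Summable fun y => N.c x y * ‖v y‖ ^ 2) :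
    Summable (fun y => N.c x y * ‖v y‖) ∧
      N.m0 x * ‖(N.m0 x : ℂ)⁻¹ * ∑' y, (N.c x y : ℂ) * v y‖ ^ 2 ≤ ∑' y, N.c x y * ‖v y‖ ^ 2 := by
  obtain ⟨hsum, hCS⟩ := sq_tsum_mul_le_tsum_mul_tsum (N.c_nonneg x) (N.c_summable x) hv
  have hnorm_eq : ∀ y, ‖(N.c x y : ℂ) * v y‖ = N.c x y * ‖v y‖ := fun y => by
    rw [norm_mul, Complex.norm_real, Real.norm_of_nonneg (N.c_nonneg x y)]
  have hnorm_le : ‖∑' y, (N.c x y : ℂ) * v y‖ ≤ ∑' y, N.c x y * ‖v y‖ := by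
    simpa only [hnorm_eq] using norm_tsum_le_tsum_norm (hsum.congr fun y => (hnorm_eq y).symm)
  refine ⟨hsum, ?_⟩
  rw [norm_mul, norm_inv, Complex.norm_real, Real.norm_of_nonneg (N.m0_nonneg x)]
  rcases (N.m0_nonneg x).eq_or_lt with hm | hm
  · rw [← hm, zero_mul]
    exact tsum_nonneg fun y => mul_nonneg (N.c_nonneg x y) (sq_nonneg _)
  · calc N.m0 x * ((N.m0 x)⁻¹ * ‖∑' y, (N.c x y : ℂ) * v y‖) ^ 2
        = ‖∑' y, (N.c x y : ℂ) * v y‖ ^ 2 / N.m0 x := by field_simp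
      _ ≤ (∑' y, N.c x y * ‖v y‖) ^ 2 / N.m0 x := by gcongr
      _ ≤ ∑' y, N.c x y * ‖v y‖ ^ 2 := by
        rw [div_le_iff₀ hm, mul_comm]
        exact hCS

theorem hasSum_integral_edgeMeasure (N : Network V) {P : (V × V) × ℝ → ℝ}
    (hP : Integrable P N.edgeMeasure) :
    HasSum (fun e : V × V => N.c e.1 e.2 / 2 * ∫ t in (0:ℝ)..1, P (e, t))
      (∫ p, P p ∂N.edgeMeasure) := by
  refine (hasSum_integral_measure hP).congr_fun fun e => ?_
  rw [(measurableEmbedding_prodMk_left e).integral_map, integral_smul_measure,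
    ENNReal.toReal_ofReal (div_nonneg (N.c_nonneg e.1 e.2) zero_le_two), smul_eq_mul,
    intervalIntegral.integral_of_le zero_le_one, integral_Ioc_eq_integral_Ioo]

theorem summable_edgeEnergy (N : Network V) {f : V → V → ℝ → ℂ}
    (hf : MemLp (fun p : (V × V) × ℝ => f p.1.1 p.1.2 p.2) 2 N.edgeMeasure) :
    Summable fun e : V × V => N.c e.1 e.2 * ∫ t in (0:ℝ)..1, ‖f e.1 e.2 t‖ ^ 2 := by
  refine ((N.hasSum_integral_edgeMeasure (hf.integrable_norm_pow two_ne_zero)).summable.mul_left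
    2).congr fun e => ?_
  ring

theorem two_mul_normSqR_eq_tsum (N : Network V) {f : V → V → ℝ → ℂ}
    (hf : MemLp (fun p : (V × V) × ℝ => f p.1.1 p.1.2 p.2) 2 N.edgeMeasure) :
    2 * N.normSqR f = ∑' e : V × V, N.c e.1 e.2 * ∫ t in (0:ℝ)..1, ‖f e.1 e.2 t‖ ^ 2 := by
  rw [normSqR, (N.summable_edgeEnergy hf).tsum_prod]
  ring

theorem IsH2Rep.c_mul_trace_le {N : Network V} {f g h : V → V → ℝ → ℂ} (hrep : N.IsH2Rep f g h)
    {a b : ℝ} (hSob : IsSobolevTraceBound a b) (x y : V) :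
    N.c x y * (‖f x y 0‖ ^ 2 + ‖g x y 0‖ ^ 2) ≤
      a * (N.c x y * ∫ t in (0:ℝ)..1, ‖h x y t‖ ^ 2) +
        b * (N.c x y * ∫ t in (0:ℝ)..1, ‖f x y t‖ ^ 2) := by
  by_cases hxy : N.adj x y
  · have hedge := hSob (f x y) (g x y) (h x y) (hrep.ftc₁ x y hxy) (hrep.ftc₂ x y hxy)
      (hrep.intervalIntegrable_g x y hxy) (hrep.intervalIntegrable_h x y hxy) 0
      ⟨le_rfl, zero_le_one⟩
    calc N.c x y * (‖f x y 0‖ ^ 2 + ‖g x y 0‖ ^ 2)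
        ≤ N.c x y * (a * (∫ t in (0:ℝ)..1, ‖h x y t‖ ^ 2) + b * ∫ t in (0:ℝ)..1, ‖f x y t‖ ^ 2) :=
          mul_le_mul_of_nonneg_left hedge (N.c_nonneg x y)
      _ = _ := by ring
  · simp [N.c_eq_zero x y hxy]

end Network

theorem Gamma_maps_into_l2_general
    {V : Type} [Countable V] [MeasurableSpace V] [DiscreteMeasurableSpace V]
    (N : Network V) (a b : ℝ)
    (hSob : ∀ f g h : ℝ → ℂ,
      (∀ t ∈ Set.Icc (0:ℝ) 1, f t = f 0 + ∫ s in (0:ℝ)..t, g s) →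
      (∀ t ∈ Set.Icc (0:ℝ) 1, g t = g 0 + ∫ s in (0:ℝ)..t, h s) →
      IntervalIntegrable g volume 0 1 → IntervalIntegrable h volume 0 1 →
      ∀ t ∈ Set.Icc (0:ℝ) 1,
        ‖f t‖^2 + ‖g t‖^2
          ≤ a * (∫ s in (0:ℝ)..1, ‖h s‖^2) + b * ∫ s in (0:ℝ)..1, ‖f s‖^2)
    (f g h : V → V → ℝ → ℂ) (hrep : N.IsH2Rep f g h)
    (φ : V → ℂ) (hφ : ∀ x y, N.adj x y → φ x = f x y 0) :
    (Summable fun x => N.m0 x * ‖φ x‖^2) ∧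
    N.vertexNormSqR φ ≤ 2*a * N.normSqR h + 2*b * N.normSqR f ∧
    (∀ x, Summable fun y => N.c x y * ‖g x y 0‖) ∧
    (Summable fun x => N.m0 x * ‖(N.m0 x : ℂ)⁻¹ * ∑' y, (N.c x y : ℂ) * g x y 0‖^2) ∧
    N.vertexNormSqR (fun x => (N.m0 x : ℂ)⁻¹ * ∑' y, (N.c x y : ℂ) * g x y 0)
      ≤ 2*a * N.normSqR h + 2*b * N.normSqR f := by
  set E : V × V → ℝ := fun e =>
    a * (N.c e.1 e.2 * ∫ t in (0:ℝ)..1, ‖h e.1 e.2 t‖ ^ 2) +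
      b * (N.c e.1 e.2 * ∫ t in (0:ℝ)..1, ‖f e.1 e.2 t‖ ^ 2)
  have hh_sum := N.summable_edgeEnergy hrep.memL2_h
  have hf_sum := N.summable_edgeEnergy hrep.memL2_f
  have hE : Summable E := (hh_sum.mul_left a).add (hf_sum.mul_left b)
  have hE_tsum : ∑' e, E e = 2*a * N.normSqR h + 2*b * N.normSqR f := by
    rw [(hh_sum.mul_left a).tsum_add (hf_sum.mul_left b), tsum_mul_left, tsum_mul_left,
      ← N.two_mul_normSqR_eq_tsum hrep.memL2_h, ← N.two_mul_normSqR_eq_tsum hrep.memL2_f]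
    ring
  have hbound := hrep.c_mul_trace_le hSob
  have hf0 := summable_and_tsum_fiber_le hE
    (fun x y => mul_nonneg (N.c_nonneg x y) (sq_nonneg ‖f x y 0‖)) fun x y =>
      (mul_le_mul_of_nonneg_left (le_add_of_nonneg_right (sq_nonneg _)) (N.c_nonneg x y)).trans
        (hbound x y)
  have hg0 := summable_and_tsum_fiber_le hE
    (fun x y => mul_nonneg (N.c_nonneg x y) (sq_nonneg ‖g x y 0‖)) fun x y =>
      (mul_le_mul_of_nonneg_left (le_add_of_nonneg_left (sq_nonneg _)) (N.c_nonneg x y)).trans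
        (hbound x y)
  have hψ x := N.summable_and_m0_mul_norm_average_sq_le x (hg0 x).1
  obtain ⟨hφ_sum, hφ_le⟩ := summable_and_tsum_le_of_le_tsum_fiber hE
    (fun x => mul_nonneg (N.m0_nonneg x) (sq_nonneg ‖φ x‖))
    fun x => (N.m0_mul_norm_sq_eq_tsum (hφ x)).trans_le (hf0 x).2
  obtain ⟨hψ_sum, hψ_le⟩ := summable_and_tsum_le_of_le_tsum_fiber hE
    (fun x => mul_nonneg (N.m0_nonneg x) (sq_nonneg _)) fun x => (hψ x).2.trans (hg0 x).2
  rw [hE_tsum] at hφ_le hψ_le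
  exact ⟨hφ_sum, hφ_le, fun x => (hψ x).1, hψ_sum, hψ_le⟩

/-- For every `F ∈ dom S`, the functions `ΓF` and `Γ'F` belong to
`ℓ²(X⁰,m⁰)`; more precisely, if `a, b > 0` are constants such that
`‖f‖²_∞ + ‖f'‖²_∞ ≤ a ‖f''‖²_{L²(0,1)} + b ‖f‖²_{L²(0,1)}` for all `f ∈ H²(0,1)`, then both
`‖ΓF‖²_{ℓ²(X⁰,m⁰)}` and `‖Γ'F‖²_{ℓ²(X⁰,m⁰)}` are bounded by
`2a ‖F''‖²_{L²(X¹,m¹)} + 2b ‖F‖²_{L²(X¹,m¹)}`.  Here `F` is described by an edgewise-`H²`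
representative `f` with derivatives `g, h` which is continuous at the vertices,
`(ΓF)(x) = F(x) = φ(x)` is the common vertex value, and
`(Γ'F)(x) = (1/m⁰(x)) ∑_{y∼x} c(xy) F'(xy,0+)`. -/
theorem Gamma_maps_into_l2
    {V : Type} [Countable V] [MeasurableSpace V] [DiscreteMeasurableSpace V]
    (N : Network V) (a b : ℝ) (ha : 0 < a) (hb : 0 < b)
    (hSob : ∀ f g h : ℝ → ℂ,
      (∀ t ∈ Set.Icc (0:ℝ) 1, f t = f 0 + ∫ s in (0:ℝ)..t, g s) →
      (∀ t ∈ Set.Icc (0:ℝ) 1, g t = g 0 + ∫ s in (0:ℝ)..t, h s) →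
      IntervalIntegrable g volume 0 1 → IntervalIntegrable h volume 0 1 →
      ∀ t ∈ Set.Icc (0:ℝ) 1,
        ‖f t‖^2 + ‖g t‖^2
          ≤ a * (∫ s in (0:ℝ)..1, ‖h s‖^2) + b * ∫ s in (0:ℝ)..1, ‖f s‖^2)
    (f g h : V → V → ℝ → ℂ) (hrep : N.IsH2Rep f g h)
    (hcont : ∀ x u v, N.adj x u → N.adj x v → f x u 0 = f x v 0)
    (φ : V → ℂ) (hφ : ∀ x y, N.adj x y → φ x = f x y 0)
    (hφ0 : ∀ x, (∀ y, ¬ N.adj x y) → φ x = 0) :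
    (Summable fun x => N.m0 x * ‖φ x‖^2) ∧
    N.vertexNormSqR φ ≤ 2*a * N.normSqR h + 2*b * N.normSqR f ∧
    (∀ x, Summable fun y => N.c x y * ‖g x y 0‖) ∧
    (Summable fun x => N.m0 x * ‖(N.m0 x : ℂ)⁻¹ * ∑' y, (N.c x y : ℂ) * g x y 0‖^2) ∧
    N.vertexNormSqR (fun x => (N.m0 x : ℂ)⁻¹ * ∑' y, (N.c x y : ℂ) * g x y 0)
      ≤ 2*a * N.normSqR h + 2*b * N.normSqR f :=
  Gamma_maps_into_l2_general N a b hSob f g h hrep φ hφ
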